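/- Let F⁺, F⁻ : ℝ → ℝ be bounded nondecreasing functions and set f = F⁺ − F⁻. Let φ : ℝ → ℝ be continuous, nonnegative, equal to 0 outside [−1, 1], and with ∫_ℝ φ = 1; for δ > 0 set φ_δ(t) = δ⁻¹ φ(t/δ). For each integer n ≥ 1 define h̄_n(x) = ∫_ℝ F⁺(x + 1/n − y) φ_{1/n}(y) dy − ∫_ℝ F⁻(x − 1/n − y) φ_{1/n}(y) dy. Then: (i) each h̄_n is continuous on ℝ; (ii) h̄_n(x) ≥ f(x) for every x and n; (iii) h̄_n(x) ≥ h̄_{n+1}(x) for every x and n; (iv) if F⁺ and F⁻ are both continuous at a point x, then h̄_n(x) → f(x) as n → ∞; (v) if F⁺ is constant on [x, x + 2/n] and F⁻ is constant on [x − 2/n, x], then h̄_n(x) = f(x); (vi) for a < b: if F⁻ is constant on [a, b) and a + 2/n ≤ b, then h̄_n is monotone nondecreasing on [a + 2/n, b]; if F⁺ is constant on (a, b] and a ≤ b − 2/n, then h̄_n is monotone nonincreasing on [a, b − 2/n]. -/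

import Mathlib

/-!
Substituting `z = n y`, `h̄_n(x) = ∫ (F⁺(x + (1 - z)/n) - F⁻(x - (1 + z)/n)) φ(z) dz`, and only
`z ∈ [-1, 1]` contributes. There the argument of `F⁺` lies in `[x, x + 2/n]` and decreases with `n`,
while that of `F⁻` lies in `[x - 2/n, x]` and increases with `n`. As `φ` is a probability density,
monotonicity of `F^±` squeezes `h̄_n(x)` between `F⁺(x) - F⁻(x)` and `F⁺(x + 2/n) - F⁻(x - 2/n)`,
and makes it nonincreasing in `n`; continuity in `x` is that of the convolution of a locally
integrable function with a continuous compactly supported kernel.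
-/

open Filter Set MeasureTheory Topology

/-- `mollify φ a F = F ∗ φ_{1/a}` with `φ_δ(t) = δ⁻¹ φ(t/δ)`. -/
noncomputable def mollify (φ : ℝ → ℝ) (a : ℝ) (F : ℝ → ℝ) (c : ℝ) : ℝ :=
  ∫ y, F (c - y) * (a * φ (a * y))

section Mollify

variable {φ F : ℝ → ℝ} {a : ℝ}

theorem mollify_eq_integral_comp_sub_div (ha : 0 < a) (F : ℝ → ℝ) (c : ℝ) :
    mollify φ a F c = ∫ z, F (c - z / a) * φ z := by
  let g : ℝ → ℝ := fun z => F (c - z / a) * φ z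
  have hscale : ∀ y, F (c - y) * (a * φ (a * y)) = a * g (a * y) := fun y => by
    simp only [g, mul_div_cancel_left₀ _ ha.ne']; ring
  simp_rw [mollify, hscale]
  rw [integral_const_mul, Measure.integral_comp_mul_left, smul_eq_mul,
    abs_of_pos (inv_pos.mpr ha), mul_inv_cancel_left₀ ha.ne']

theorem eq_zero_of_notMem_Ioo (hφc : Continuous φ)
    (hφsupp : ∀ t, t ∉ Icc (-1 : ℝ) 1 → φ t = 0) {t : ℝ} (ht : t ∉ Ioo (-1 : ℝ) 1) : φ t = 0 := by
  have hclosure : (Ioo (-1 : ℝ) 1)ᶜ ⊆ φ ⁻¹' {0} := by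
    rw [← interior_Icc, ← closure_compl]
    exact closure_minimal hφsupp (isClosed_singleton.preimage hφc)
  exact hclosure ht

theorem integrable_comp_sub_div_mul (hφc : Continuous φ)
    (hφsupp : ∀ t, t ∉ Icc (-1 : ℝ) 1 → φ t = 0) (hF : Monotone F) (ha : 0 < a) (c : ℝ) :
    Integrable fun z => F (c - z / a) * φ z := by
  have hanti : Antitone fun z => F (c - z / a) := fun x y hxy => hF (by gcongr)
  exact hanti.locallyIntegrable.integrable_smul_right_of_hasCompactSupport hφc
    (HasCompactSupport.intro isCompact_Icc hφsupp)

theorem integral_mul_le_integral_mul (hφ0 : ∀ t, 0 ≤ φ t)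
    (hφsupp : ∀ t, t ∉ Icc (-1 : ℝ) 1 → φ t = 0) {u v : ℝ → ℝ}
    (hu : Integrable fun z => u z * φ z) (hv : Integrable fun z => v z * φ z)
    (huv : ∀ z ∈ Icc (-1 : ℝ) 1, u z ≤ v z) : ∫ z, u z * φ z ≤ ∫ z, v z * φ z := by
  refine integral_mono hu hv fun z => ?_
  by_cases hz : z ∈ Icc (-1 : ℝ) 1
  · exact mul_le_mul_of_nonneg_right (huv z hz) (hφ0 z)
  · simp [hφsupp z hz]

theorem monotone_mollify (hφc : Continuous φ) (hφ0 : ∀ t, 0 ≤ φ t)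
    (hφsupp : ∀ t, t ∉ Icc (-1 : ℝ) 1 → φ t = 0) (hF : Monotone F) (ha : 0 < a) :
    Monotone (mollify φ a F) := fun c c' hcc' => by
  simp_rw [mollify_eq_integral_comp_sub_div ha]
  exact integral_mul_le_integral_mul hφ0 hφsupp (integrable_comp_sub_div_mul hφc hφsupp hF ha c)
    (integrable_comp_sub_div_mul hφc hφsupp hF ha c') fun z _ => hF (by linarith)

theorem integral_const_mul_of_integral_eq_one (hφint : ∫ t, φ t = 1) (r : ℝ) :
    ∫ z, r * φ z = r := by
  rw [integral_const_mul, hφint, mul_one]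

theorem le_mollify (hφc : Continuous φ) (hφ0 : ∀ t, 0 ≤ φ t)
    (hφsupp : ∀ t, t ∉ Icc (-1 : ℝ) 1 → φ t = 0) (hφint : ∫ t, φ t = 1) (hF : Monotone F)
    (ha : 0 < a) (c : ℝ) : F (c - 1 / a) ≤ mollify φ a F c := by
  have hφi : Integrable φ := hφc.integrable_of_hasCompactSupport (.intro isCompact_Icc hφsupp)
  rw [mollify_eq_integral_comp_sub_div ha,
    ← integral_const_mul_of_integral_eq_one hφint (F (c - 1 / a))]
  refine integral_mul_le_integral_mul hφ0 hφsupp (hφi.const_mul _)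
    (integrable_comp_sub_div_mul hφc hφsupp hF ha c) fun z hz => hF ?_
  have : z / a ≤ 1 / a := by gcongr; exact hz.2
  linarith

theorem mollify_le (hφc : Continuous φ) (hφ0 : ∀ t, 0 ≤ φ t)
    (hφsupp : ∀ t, t ∉ Icc (-1 : ℝ) 1 → φ t = 0) (hφint : ∫ t, φ t = 1) (hF : Monotone F)
    (ha : 0 < a) (c : ℝ) : mollify φ a F c ≤ F (c + 1 / a) := by
  have hφi : Integrable φ := hφc.integrable_of_hasCompactSupport (.intro isCompact_Icc hφsupp)
  rw [mollify_eq_integral_comp_sub_div ha,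
    ← integral_const_mul_of_integral_eq_one hφint (F (c + 1 / a))]
  refine integral_mul_le_integral_mul hφ0 hφsupp (integrable_comp_sub_div_mul hφc hφsupp hF ha c)
    (hφi.const_mul _) fun z hz => hF ?_
  have : -1 / a ≤ z / a := by gcongr; exact hz.1
  rw [neg_div] at this
  linarith

theorem mollify_eq_of_forall_mem_Ioo (hφc : Continuous φ)
    (hφsupp : ∀ t, t ∉ Icc (-1 : ℝ) 1 → φ t = 0) (hφint : ∫ t, φ t = 1) (ha : 0 < a) {c v : ℝ}
    (hFv : ∀ y ∈ Ioo (c - 1 / a) (c + 1 / a), F y = v) : mollify φ a F c = v := by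
  rw [mollify_eq_integral_comp_sub_div ha, ← integral_const_mul_of_integral_eq_one hφint v]
  congr 1 with z
  by_cases hz : z ∈ Ioo (-1 : ℝ) 1
  · have hlt : z / a < 1 / a := by gcongr; exact hz.2
    have hgt : -1 / a < z / a := by gcongr; exact hz.1
    rw [neg_div] at hgt
    rw [hFv (c - z / a) ⟨by linarith, by linarith⟩]
  · simp [eq_zero_of_notMem_Ioo hφc hφsupp hz]

theorem continuous_mollify (hφc : Continuous φ)
    (hφsupp : ∀ t, t ∉ Icc (-1 : ℝ) 1 → φ t = 0) (hF : Monotone F) (ha : a ≠ 0) :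
    Continuous (mollify φ a F) := by
  have hkernel : HasCompactSupport fun y => a * φ (a * y) :=
    ((HasCompactSupport.intro isCompact_Icc hφsupp).comp_smul ha).mul_left
  exact hkernel.continuous_convolution_left (L := (ContinuousLinearMap.mul ℝ ℝ).flip)
    (μ := volume) (by fun_prop) hF.locallyIntegrable

theorem antitoneOn_mollify_add_inv (hφc : Continuous φ) (hφ0 : ∀ t, 0 ≤ φ t)
    (hφsupp : ∀ t, t ∉ Icc (-1 : ℝ) 1 → φ t = 0) (hF : Monotone F) (x : ℝ) :
    AntitoneOn (fun a => mollify φ a F (x + 1 / a)) (Ioi 0) := by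
  intro a ha b hb hab
  simp only [mollify_eq_integral_comp_sub_div ha, mollify_eq_integral_comp_sub_div hb]
  refine integral_mul_le_integral_mul hφ0 hφsupp (integrable_comp_sub_div_mul hφc hφsupp hF hb _)
    (integrable_comp_sub_div_mul hφc hφsupp hF ha _) fun z hz => hF ?_
  have : (1 - z) / b ≤ (1 - z) / a := div_le_div_of_nonneg_left (by linarith [hz.2]) ha hab
  rw [add_sub_assoc, ← sub_div, add_sub_assoc, ← sub_div]
  linarith

theorem monotoneOn_mollify_sub_inv (hφc : Continuous φ) (hφ0 : ∀ t, 0 ≤ φ t)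
    (hφsupp : ∀ t, t ∉ Icc (-1 : ℝ) 1 → φ t = 0) (hF : Monotone F) (x : ℝ) :
    MonotoneOn (fun a => mollify φ a F (x - 1 / a)) (Ioi 0) := by
  intro a ha b hb hab
  simp only [mollify_eq_integral_comp_sub_div ha, mollify_eq_integral_comp_sub_div hb]
  refine integral_mul_le_integral_mul hφ0 hφsupp (integrable_comp_sub_div_mul hφc hφsupp hF ha _)
    (integrable_comp_sub_div_mul hφc hφsupp hF hb _) fun z hz => hF ?_
  have : (1 + z) / b ≤ (1 + z) / a := div_le_div_of_nonneg_left (by linarith [hz.1]) ha hab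
  rw [sub_sub, ← add_div, sub_sub, ← add_div]
  linarith

theorem tendsto_mollify_add_div (hφc : Continuous φ) (hφ0 : ∀ t, 0 ≤ φ t)
    (hφsupp : ∀ t, t ∉ Icc (-1 : ℝ) 1 → φ t = 0) (hφint : ∫ t, φ t = 1) (hF : Monotone F)
    {x : ℝ} (hx : ContinuousAt F x) (k : ℝ) :
    Tendsto (fun a => mollify φ a F (x + k / a)) atTop (𝓝 (F x)) := by
  have hshift : ∀ j : ℝ, Tendsto (fun a => F (x + j / a)) atTop (𝓝 (F x)) := fun j =>
    hx.tendsto.comp <| by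
      simpa using (tendsto_const_nhds (x := x)).add
        ((tendsto_const_nhds (x := j)).div_atTop tendsto_id)
  refine tendsto_of_tendsto_of_tendsto_of_le_of_le' (hshift (k - 1)) (hshift (k + 1)) ?_ ?_
  · filter_upwards [eventually_gt_atTop 0] with a ha
    simpa only [add_sub_assoc, sub_div] using le_mollify hφc hφ0 hφsupp hφint hF ha (x + k / a)
  · filter_upwards [eventually_gt_atTop 0] with a ha
    simpa only [add_assoc, add_div] using mollify_le hφc hφ0 hφsupp hφint hF ha (x + k / a)

end Mollify

/-- `shiftedMollify φ n F⁺ F⁻` is `h̄_n`. -/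
noncomputable def shiftedMollify (φ : ℝ → ℝ) (a : ℝ) (P M : ℝ → ℝ) (x : ℝ) : ℝ :=
  mollify φ a P (x + 1 / a) - mollify φ a M (x - 1 / a)

section ShiftedMollify

variable {φ P M : ℝ → ℝ} {a : ℝ}

theorem continuous_shiftedMollify (hφc : Continuous φ)
    (hφsupp : ∀ t, t ∉ Icc (-1 : ℝ) 1 → φ t = 0) (hP : Monotone P) (hM : Monotone M)
    (ha : a ≠ 0) : Continuous (shiftedMollify φ a P M) :=
  ((continuous_mollify hφc hφsupp hP ha).comp (continuous_add_const _)).sub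
    ((continuous_mollify hφc hφsupp hM ha).comp (continuous_sub_right _))

theorem sub_le_shiftedMollify (hφc : Continuous φ) (hφ0 : ∀ t, 0 ≤ φ t)
    (hφsupp : ∀ t, t ∉ Icc (-1 : ℝ) 1 → φ t = 0) (hφint : ∫ t, φ t = 1) (hP : Monotone P)
    (hM : Monotone M) (ha : 0 < a) (x : ℝ) : P x - M x ≤ shiftedMollify φ a P M x :=
  sub_le_sub (by simpa using le_mollify hφc hφ0 hφsupp hφint hP ha (x + 1 / a))
    (by simpa using mollify_le hφc hφ0 hφsupp hφint hM ha (x - 1 / a))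

theorem antitoneOn_shiftedMollify_apply (hφc : Continuous φ) (hφ0 : ∀ t, 0 ≤ φ t)
    (hφsupp : ∀ t, t ∉ Icc (-1 : ℝ) 1 → φ t = 0) (hP : Monotone P) (hM : Monotone M) (x : ℝ) :
    AntitoneOn (fun a => shiftedMollify φ a P M x) (Ioi 0) := fun _ ha _ hb hab =>
  sub_le_sub (antitoneOn_mollify_add_inv hφc hφ0 hφsupp hP x ha hb hab)
    (monotoneOn_mollify_sub_inv hφc hφ0 hφsupp hM x ha hb hab)

theorem tendsto_shiftedMollify (hφc : Continuous φ) (hφ0 : ∀ t, 0 ≤ φ t)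
    (hφsupp : ∀ t, t ∉ Icc (-1 : ℝ) 1 → φ t = 0) (hφint : ∫ t, φ t = 1) (hP : Monotone P)
    (hM : Monotone M) {x : ℝ} (hPx : ContinuousAt P x) (hMx : ContinuousAt M x) :
    Tendsto (fun a => shiftedMollify φ a P M x) atTop (𝓝 (P x - M x)) := by
  have hMlim := tendsto_mollify_add_div hφc hφ0 hφsupp hφint hM hMx (-1)
  simp only [neg_div, ← sub_eq_add_neg] at hMlim
  exact (tendsto_mollify_add_div hφc hφ0 hφsupp hφint hP hPx 1).sub hMlim

theorem shiftedMollify_eq_sub (hφc : Continuous φ)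
    (hφsupp : ∀ t, t ∉ Icc (-1 : ℝ) 1 → φ t = 0) (hφint : ∫ t, φ t = 1) (ha : 0 < a) {x : ℝ}
    (hPx : ∀ y ∈ Icc x (x + 2 / a), P y = P x) (hMx : ∀ y ∈ Icc (x - 2 / a) x, M y = M x) :
    shiftedMollify φ a P M x = P x - M x := by
  have h2 : 2 / a = 1 / a + 1 / a := by ring
  rw [shiftedMollify, mollify_eq_of_forall_mem_Ioo hφc hφsupp hφint ha fun y hy =>
      hPx y ⟨by linarith [hy.1], by linarith [hy.2]⟩,
    mollify_eq_of_forall_mem_Ioo hφc hφsupp hφint ha fun y hy =>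
      hMx y ⟨by linarith [hy.1], by linarith [hy.2]⟩]

theorem monotoneOn_shiftedMollify (hφc : Continuous φ) (hφ0 : ∀ t, 0 ≤ φ t)
    (hφsupp : ∀ t, t ∉ Icc (-1 : ℝ) 1 → φ t = 0) (hφint : ∫ t, φ t = 1) (hP : Monotone P)
    (ha : 0 < a) {s t : ℝ} (hM : ∀ y ∈ Ico s t, ∀ z ∈ Ico s t, M y = M z) :
    MonotoneOn (shiftedMollify φ a P M) (Icc (s + 2 / a) t) := by
  have h2 : 2 / a = 1 / a + 1 / a := by ring
  have hinv : 0 < 1 / a := by positivity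
  have hMconst : ∀ x ∈ Icc (s + 2 / a) t, mollify φ a M (x - 1 / a) = M s := fun x hx =>
    mollify_eq_of_forall_mem_Ioo hφc hφsupp hφint ha fun y hy =>
      hM y ⟨by linarith [hy.1, hx.1], by linarith [hy.2, hx.2]⟩ s ⟨le_rfl, by linarith [hx.1, hx.2]⟩
  intro x hx x' hx' hxx'
  rw [shiftedMollify, shiftedMollify, hMconst x hx, hMconst x' hx']
  exact sub_le_sub_right (monotone_mollify hφc hφ0 hφsupp hP ha (by linarith)) _

theorem antitoneOn_shiftedMollify (hφc : Continuous φ) (hφ0 : ∀ t, 0 ≤ φ t)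
    (hφsupp : ∀ t, t ∉ Icc (-1 : ℝ) 1 → φ t = 0) (hφint : ∫ t, φ t = 1) (hM : Monotone M)
    (ha : 0 < a) {s t : ℝ} (hP : ∀ y ∈ Ioc s t, ∀ z ∈ Ioc s t, P y = P z) :
    AntitoneOn (shiftedMollify φ a P M) (Icc s (t - 2 / a)) := by
  have h2 : 2 / a = 1 / a + 1 / a := by ring
  have hinv : 0 < 1 / a := by positivity
  have hPconst : ∀ x ∈ Icc s (t - 2 / a), mollify φ a P (x + 1 / a) = P t := fun x hx =>
    mollify_eq_of_forall_mem_Ioo hφc hφsupp hφint ha fun y hy =>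
      hP y ⟨by linarith [hy.1, hx.1], by linarith [hy.2, hx.2]⟩ t ⟨by linarith [hx.1, hx.2], le_rfl⟩
  intro x hx x' hx' hxx'
  rw [shiftedMollify, shiftedMollify, hPconst x hx, hPconst x' hx']
  exact sub_le_sub_left (monotone_mollify hφc hφ0 hφsupp hM ha (by linarith)) _

end ShiftedMollify

theorem shifted_mollification_from_above_general
    (Fp Fm : ℝ → ℝ)
    (hFp : Monotone Fp) (hFm : Monotone Fm)
    (f : ℝ → ℝ) (hf : ∀ x : ℝ, f x = Fp x - Fm x)
    (φ : ℝ → ℝ) (hφc : Continuous φ) (hφ0 : ∀ t : ℝ, 0 ≤ φ t)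
    (hφsupp : ∀ t : ℝ, t ∉ Set.Icc (-1 : ℝ) 1 → φ t = 0)
    (hφint : ∫ t : ℝ, φ t = 1)
    (hbar : ℕ → ℝ → ℝ)
    (hhbar : ∀ n : ℕ, 1 ≤ n → ∀ x : ℝ,
      hbar n x =
        (∫ y : ℝ, Fp (x + 1 / (n : ℝ) - y) * ((n : ℝ) * φ ((n : ℝ) * y))) -
        ∫ y : ℝ, Fm (x - 1 / (n : ℝ) - y) * ((n : ℝ) * φ ((n : ℝ) * y))) :
    -- (i) continuity
    (∀ n : ℕ, 1 ≤ n → Continuous (hbar n)) ∧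
    -- (ii) approximation from above
    (∀ n : ℕ, 1 ≤ n → ∀ x : ℝ, f x ≤ hbar n x) ∧
    -- (iii) monotonicity in n
    (∀ n : ℕ, 1 ≤ n → ∀ x : ℝ, hbar (n + 1) x ≤ hbar n x) ∧
    -- (iv) convergence at common continuity points
    (∀ x : ℝ, ContinuousAt Fp x → ContinuousAt Fm x →
      Tendsto (fun n : ℕ => hbar n x) atTop (nhds (f x))) ∧
    -- (v) exactness where the one-sided pieces are constant
    (∀ n : ℕ, 1 ≤ n → ∀ x : ℝ,
      (∀ y ∈ Set.Icc x (x + 2 / (n : ℝ)), Fp y = Fp x) →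
      (∀ y ∈ Set.Icc (x - 2 / (n : ℝ)) x, Fm y = Fm x) →
      hbar n x = f x) ∧
    -- (vi) one-sided monotonicity
    (∀ n : ℕ, 1 ≤ n → ∀ a b : ℝ, a < b →
      ((∀ y ∈ Set.Ico a b, ∀ z ∈ Set.Ico a b, Fm y = Fm z) →
        a + 2 / (n : ℝ) ≤ b →
        MonotoneOn (hbar n) (Set.Icc (a + 2 / (n : ℝ)) b)) ∧
      ((∀ y ∈ Set.Ioc a b, ∀ z ∈ Set.Ioc a b, Fp y = Fp z) →
        a ≤ b - 2 / (n : ℝ) →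
        AntitoneOn (hbar n) (Set.Icc a (b - 2 / (n : ℝ))))) := by
  have hpos : ∀ n : ℕ, 1 ≤ n → (0 : ℝ) < n := fun n hn => Nat.cast_pos.mpr hn
  have hbar_eq : ∀ n : ℕ, 1 ≤ n → hbar n = shiftedMollify φ n Fp Fm :=
    fun n hn => funext (hhbar n hn)
  refine ⟨fun n hn => ?_, fun n hn x => ?_, fun n hn x => ?_, fun x hFpx hFmx => ?_,
    fun n hn x hFpx hFmx => ?_, fun n hn a b _ => ⟨fun hFmab _ => ?_, fun hFpab _ => ?_⟩⟩
  · rw [hbar_eq n hn]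
    exact continuous_shiftedMollify hφc hφsupp hFp hFm (hpos n hn).ne'
  · rw [hbar_eq n hn, hf]
    exact sub_le_shiftedMollify hφc hφ0 hφsupp hφint hFp hFm (hpos n hn) x
  · rw [hbar_eq n hn, hbar_eq (n + 1) (by omega)]
    exact antitoneOn_shiftedMollify_apply hφc hφ0 hφsupp hFp hFm x (hpos n hn)
      (hpos (n + 1) (by omega)) (by push_cast; linarith)
  · rw [hf]
    refine ((tendsto_shiftedMollify hφc hφ0 hφsupp hφint hFp hFm hFpx hFmx).comp
      tendsto_natCast_atTop_atTop).congr' ?_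
    filter_upwards [eventually_ge_atTop 1] with n hn
    rw [Function.comp_apply, hbar_eq n hn]
  · rw [hbar_eq n hn, hf]
    exact shiftedMollify_eq_sub hφc hφsupp hφint (hpos n hn) hFpx hFmx
  · rw [hbar_eq n hn]
    exact monotoneOn_shiftedMollify hφc hφ0 hφsupp hφint hFp (hpos n hn) hFmab
  · rw [hbar_eq n hn]
    exact antitoneOn_shiftedMollify hφc hφ0 hφsupp hφint hFm (hpos n hn) hFpab

/-- Properties of the shifted mollification `h̄_n` from the proof of Lemma 3.2
(Aprox1): `f = F⁺ − F⁻` with `F⁺, F⁻` bounded nondecreasing,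
`φ_δ(t) = δ⁻¹ φ(t/δ)` a mollifier, and
`h̄_n(x) = (F⁺ ∗ φ_{1/n})(x + 1/n) − (F⁻ ∗ φ_{1/n})(x − 1/n)`. -/
theorem shifted_mollification_from_above
    (Fp Fm : ℝ → ℝ)
    (hFp : Monotone Fp) (hFm : Monotone Fm)
    (hFpbd : ∃ C : ℝ, ∀ x : ℝ, |Fp x| ≤ C)
    (hFmbd : ∃ C : ℝ, ∀ x : ℝ, |Fm x| ≤ C)
    (f : ℝ → ℝ) (hf : ∀ x : ℝ, f x = Fp x - Fm x)
    (φ : ℝ → ℝ) (hφc : Continuous φ) (hφ0 : ∀ t : ℝ, 0 ≤ φ t)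
    (hφsupp : ∀ t : ℝ, t ∉ Set.Icc (-1 : ℝ) 1 → φ t = 0)
    (hφint : ∫ t : ℝ, φ t = 1)
    (hbar : ℕ → ℝ → ℝ)
    (hhbar : ∀ n : ℕ, 1 ≤ n → ∀ x : ℝ,
      hbar n x =
        (∫ y : ℝ, Fp (x + 1 / (n : ℝ) - y) * ((n : ℝ) * φ ((n : ℝ) * y))) -
        ∫ y : ℝ, Fm (x - 1 / (n : ℝ) - y) * ((n : ℝ) * φ ((n : ℝ) * y))) :
    -- (i) continuity
    (∀ n : ℕ, 1 ≤ n → Continuous (hbar n)) ∧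
    -- (ii) approximation from above
    (∀ n : ℕ, 1 ≤ n → ∀ x : ℝ, f x ≤ hbar n x) ∧
    -- (iii) monotonicity in n
    (∀ n : ℕ, 1 ≤ n → ∀ x : ℝ, hbar (n + 1) x ≤ hbar n x) ∧
    -- (iv) convergence at common continuity points
    (∀ x : ℝ, ContinuousAt Fp x → ContinuousAt Fm x →
      Tendsto (fun n : ℕ => hbar n x) atTop (nhds (f x))) ∧
    -- (v) exactness where the one-sided pieces are constant
    (∀ n : ℕ, 1 ≤ n → ∀ x : ℝ,
      (∀ y ∈ Set.Icc x (x + 2 / (n : ℝ)), Fp y = Fp x) →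
      (∀ y ∈ Set.Icc (x - 2 / (n : ℝ)) x, Fm y = Fm x) →
      hbar n x = f x) ∧
    -- (vi) one-sided monotonicity
    (∀ n : ℕ, 1 ≤ n → ∀ a b : ℝ, a < b →
      ((∀ y ∈ Set.Ico a b, ∀ z ∈ Set.Ico a b, Fm y = Fm z) →
        a + 2 / (n : ℝ) ≤ b →
        MonotoneOn (hbar n) (Set.Icc (a + 2 / (n : ℝ)) b)) ∧
      ((∀ y ∈ Set.Ioc a b, ∀ z ∈ Set.Ioc a b, Fp y = Fp z) →
        a ≤ b - 2 / (n : ℝ) →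
        AntitoneOn (hbar n) (Set.Icc a (b - 2 / (n : ℝ))))) :=
  shifted_mollification_from_above_general Fp Fm hFp hFm f hf φ hφc hφ0 hφsupp hφint hbar hhbar
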